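/- arXiv:0909.2291 — 7 statements merged into one kernel-verified Lean document; each statement's English description precedes it below -/
import Mathlib

section
/- The Weyl algebra Aₙ(ℂ) is a simple ring: its only two-sided ideals are the zero ideal and the whole algebra. (Paper's Lemma 5.1.1.) -/
open MvPolynomial

/-- The Weyl algebra `Aₙ(ℂ)`, realized as the `ℂ`-subalgebra of
`Module.End ℂ (MvPolynomial (Fin n) ℂ)` generated by the multiplication operators
`xᵢ` (multiplication by the variable `X i`) and the formal partial derivative
operators `∂ᵢ = pderiv i`. -/
noncomputable def WeylAlgebra (n : ℕ) :
    Subalgebra ℂ (Module.End ℂ (MvPolynomial (Fin n) ℂ)) :=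
  Algebra.adjoin ℂ
    ((Set.range fun i : Fin n =>
        (LinearMap.mulLeft ℂ (X i) : Module.End ℂ (MvPolynomial (Fin n) ℂ))) ∪
     (Set.range fun i : Fin n =>
        ((pderiv i).toLinearMap : Module.End ℂ (MvPolynomial (Fin n) ℂ))))

namespace WeylProof

section GeneralRing

variable {A : Type*} [Ring A]

/-- Inner derivation `a ↦ x*a - a*x`. -/
def adc (x a : A) : A := x * a - a * x

lemma adc_add (x a b : A) : adc x (a + b) = adc x a + adc x b := by
  simp only [adc]; noncomm_ring

lemma adc_zero (x : A) : adc x 0 = 0 := by simp [adc]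

lemma adc_mul (x a b : A) : adc x (a * b) = adc x a * b + a * adc x b := by
  simp only [adc]; noncomm_ring

lemma adc_iter_zero (x : A) (K : ℕ) : (adc x)^[K] 0 = 0 := by
  induction K with
  | zero => rfl
  | succ K ih => rw [Function.iterate_succ_apply, adc_zero, ih]

lemma adc_iter_add (x : A) (K : ℕ) (a b : A) :
    (adc x)^[K] (a + b) = (adc x)^[K] a + (adc x)^[K] b := by
  induction K generalizing a b with
  | zero => rfl
  | succ K ih => rw [Function.iterate_succ_apply, adc_add, ih,
      Function.iterate_succ_apply, Function.iterate_succ_apply]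

lemma adc_iter_mul_aux (x : A) :
    ∀ (K N M : ℕ) (a b : A), N + M ≤ K → (adc x)^[N] a = 0 → (adc x)^[M] b = 0 →
      (adc x)^[N + M] (a * b) = 0 := by
  intro K
  induction K with
  | zero =>
    intro N M a b hK ha hb
    obtain ⟨rfl, rfl⟩ : N = 0 ∧ M = 0 := by omega
    simp only [Function.iterate_zero, id] at ha ⊢
    subst ha; simp
  | succ K ih =>
    intro N M a b hK ha hb
    match N, M with
    | 0, M =>
      simp only [Function.iterate_zero, id] at ha
      subst ha
      rw [zero_mul, zero_add, adc_iter_zero]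
    | N, 0 =>
      simp only [Function.iterate_zero, id] at hb
      subst hb
      rw [mul_zero, adc_iter_zero]
    | N + 1, M + 1 =>
      have h1 : (adc x)^[N] (adc x a) = 0 := by
        rwa [← Function.iterate_succ_apply]
      have h2 : (adc x)^[M] (adc x b) = 0 := by
        rwa [← Function.iterate_succ_apply]
      have e : N + 1 + (M + 1) = (N + (M + 1)) + 1 := by omega
      rw [e, Function.iterate_succ_apply, adc_mul, adc_iter_add]
      have t1 : (adc x)^[N + (M + 1)] (adc x a * b) = 0 :=
        ih N (M + 1) _ _ (by omega) h1 hb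
      have t2 : (adc x)^[N + (M + 1)] (a * adc x b) = 0 := by
        have := ih (N + 1) M a (adc x b) (by omega) ha h2
        rwa [show N + 1 + M = N + (M + 1) by omega] at this
      rw [t1, t2, add_zero]

lemma adc_iter_mul (x a b : A) (N M : ℕ) (ha : (adc x)^[N] a = 0) (hb : (adc x)^[M] b = 0) :
    (adc x)^[N + M] (a * b) = 0 :=
  adc_iter_mul_aux x (N + M) N M a b le_rfl ha hb

lemma adc_iter_eventually (x a : A) {N M : ℕ} (h : (adc x)^[N] a = 0) (hNM : N ≤ M) :
    (adc x)^[M] a = 0 := by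
  obtain ⟨k, rfl⟩ := Nat.exists_eq_add_of_le hNM
  rw [add_comm, Function.iterate_add_apply, h, adc_iter_zero]

lemma adc_comm (x y a : A) (h : x * y = y * x) : adc x (adc y a) = adc y (adc x a) := by
  have key : adc x (adc y a) - adc y (adc x a) =
      (x * y) * a - (y * x) * a - (a * (x * y) - a * (y * x)) := by
    simp only [adc]; noncomm_ring
  rw [h] at key
  simp only [sub_self, sub_zero] at key
  exact sub_eq_zero.mp key

lemma adc_swap_iter (x y : A) (h : x * y = y * x) (k : ℕ) (u : A) :
    adc y ((adc x)^[k] u) = (adc x)^[k] (adc y u) := by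
  induction k generalizing u with
  | zero => rfl
  | succ k ih => rw [Function.iterate_succ_apply, Function.iterate_succ_apply, ih,
      adc_comm x y u h]

lemma adc_central [Algebra ℂ A] (x : A) (c : ℂ) :
    adc x (algebraMap ℂ A c) = 0 := by
  rw [adc, Algebra.commutes, sub_self]

end GeneralRing

section Polynomial

variable {n : ℕ}

abbrev P (n : ℕ) := MvPolynomial (Fin n) ℂ
abbrev E (n : ℕ) := Module.End ℂ (P n)

lemma pderiv_as_sum (i : Fin n) (f : P n) :
    pderiv i f = ∑ d ∈ f.support,
      monomial (d - Finsupp.single i 1) (coeff d f * (d i : ℂ)) := by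
  conv_lhs => rw [f.as_sum]
  rw [map_sum]
  refine Finset.sum_congr rfl fun d _ => ?_
  rw [pderiv_monomial]

lemma sub_single_add (i : Fin n) (d : Fin n →₀ ℕ) (hd : d i ≠ 0) :
    (d - Finsupp.single i 1) + Finsupp.single i 1 = d :=
  tsub_add_cancel_of_le (Finsupp.single_le_iff.mpr (by omega))

lemma coeff_pderiv_sub (i : Fin n) (f : P n) (m : Fin n →₀ ℕ)
    (hm : m ∈ f.support) (hmi : m i ≠ 0) :
    coeff (m - Finsupp.single i 1) (pderiv i f) = coeff m f * (m i : ℂ) := by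
  rw [pderiv_as_sum, coeff_sum, Finset.sum_eq_single_of_mem m hm]
  · rw [coeff_monomial, if_pos rfl]
  · intro d hd hdm
    rw [coeff_monomial]
    by_cases hdi : d i = 0
    · simp [hdi]
    · rw [if_neg]
      intro h
      exact hdm (by
        have := congrArg (· + Finsupp.single i 1) h
        simpa [sub_single_add i d hdi, sub_single_add i m hmi] using this)

lemma totalDegree_pderiv_lt (i : Fin n) (f : P n)
    (hf : f.totalDegree ≠ 0) : (pderiv i f).totalDegree < f.totalDegree := by
  have h1 : (pderiv i f).totalDegree ≤ f.totalDegree - 1 := by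
    rw [pderiv_as_sum]
    apply totalDegree_finsetSum_le
    intro d hd
    by_cases hdi : d i = 0
    · simp [hdi]
    · refine le_trans (totalDegree_monomial_le _ _) ?_
      show ((d - Finsupp.single i 1).sum fun _ e => e) ≤ f.totalDegree - 1
      have hsum : ((d - Finsupp.single i 1).sum fun _ e => e) + 1 = d.sum fun _ e => e := by
        conv_rhs => rw [← sub_single_add i d hdi]
        rw [Finsupp.sum_add_index' (fun _ => rfl) (fun _ _ _ => rfl)]
        simp [Finsupp.sum_single_index]
      have hle : (d.sum fun _ e => e) ≤ f.totalDegree := le_totalDegree hd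
      omega
  omega

lemma eq_C_of_totalDegree_eq_zero (f : P n) (hf : f.totalDegree = 0) :
    f = C (coeff 0 f) := by
  ext m
  by_cases hm : m = 0
  · simp [hm]
  · rw [coeff_C, if_neg (Ne.symm hm)]
    by_contra h
    have hmem : m ∈ f.support := by rwa [mem_support_iff]
    exact hm (by
      ext j
      have := (totalDegree_eq_zero_iff (Fin n) f).mp hf m hmem j
      simpa using this)

lemma exists_index_ne_zero (f : P n) (hf : f.totalDegree ≠ 0) :
    ∃ (m : Fin n →₀ ℕ) (i : Fin n), m ∈ f.support ∧ m i ≠ 0 := by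
  by_contra h
  push_neg at h
  apply hf
  rw [totalDegree_eq_zero_iff]
  intro m hm j
  by_contra hj
  exact hj (h m j hm)

end Polynomial

section Operators

variable {n : ℕ}

noncomputable def xop (i : Fin n) : E n := LinearMap.mulLeft ℂ (X i)
noncomputable def dop (i : Fin n) : E n := (pderiv i).toLinearMap

lemma xop_mem (i : Fin n) : xop i ∈ WeylAlgebra n :=
  Algebra.subset_adjoin (Or.inl ⟨i, rfl⟩)

lemma dop_mem (i : Fin n) : dop i ∈ WeylAlgebra n :=
  Algebra.subset_adjoin (Or.inr ⟨i, rfl⟩)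

lemma xop_apply (i : Fin n) (p : P n) : xop i p = X i * p := rfl
lemma dop_apply (i : Fin n) (p : P n) : dop i p = pderiv i p := rfl

lemma mulLeft_mul' (f g : P n) :
    LinearMap.mulLeft ℂ (f * g)
      = LinearMap.mulLeft ℂ f * LinearMap.mulLeft ℂ g :=
  LinearMap.ext fun p => mul_assoc f g p

lemma mulLeft_add' (f g : P n) :
    LinearMap.mulLeft ℂ (f + g)
      = LinearMap.mulLeft ℂ f + LinearMap.mulLeft ℂ g :=
  LinearMap.ext fun p => add_mul f g p

lemma mulLeft_comm_mulLeft (f g : P n) :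
    LinearMap.mulLeft ℂ f * LinearMap.mulLeft ℂ g
      = LinearMap.mulLeft ℂ g * LinearMap.mulLeft ℂ f := by
  rw [← mulLeft_mul', ← mulLeft_mul', mul_comm]

lemma adc_xop_xop (i j : Fin n) : adc (xop i) (xop j) = 0 := by
  rw [adc]
  exact sub_eq_zero_of_eq (mulLeft_comm_mulLeft (X i) (X j))

lemma mulLeft_algebraMap (c : ℂ) :
    LinearMap.mulLeft ℂ (algebraMap ℂ (P n) c) = algebraMap ℂ (E n) c := by
  refine LinearMap.ext fun p => ?_
  simp [LinearMap.mulLeft_apply, Module.algebraMap_end_apply, Algebra.smul_def]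

lemma adc_xop_dop (i j : Fin n) :
    adc (xop i) (dop j) = algebraMap ℂ (E n) (if j = i then -1 else 0) := by
  refine LinearMap.ext fun p => ?_
  by_cases h : j = i
  · subst h
    rw [if_pos rfl]
    simp only [adc, LinearMap.sub_apply, Module.End.mul_apply, xop_apply, dop_apply,
      Module.algebraMap_end_apply, pderiv_mul, pderiv_X_self, one_mul]
    rw [smul_eq_C_mul]
    have hC : (C (-1 : ℂ) : P n) = -1 := by simp
    rw [hC]; ring
  · rw [if_neg h]
    simp only [adc, LinearMap.sub_apply, Module.End.mul_apply, xop_apply, dop_apply,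
      Module.algebraMap_end_apply, pderiv_mul, pderiv_X_of_ne (Ne.symm h)]
    simp

lemma mulLeft_comm_of_comm_xop (v : E n) (h : ∀ i, xop i * v = v * xop i) (g : P n) :
    LinearMap.mulLeft ℂ g * v = v * LinearMap.mulLeft ℂ g := by
  have hg : g ∈ Algebra.adjoin ℂ (Set.range (X : Fin n → P n)) := by
    rw [adjoin_range_X]; trivial
  induction hg using Algebra.adjoin_induction with
  | mem x hx => obtain ⟨i, rfl⟩ := hx; exact h i
  | algebraMap r => rw [mulLeft_algebraMap, Algebra.commutes, ← Algebra.commutes r v]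
  | add x y hx hy ihx ihy =>
      rw [mulLeft_add', add_mul, mul_add, ihx, ihy]
  | mul x y hx hy ihx ihy =>
      rw [mulLeft_mul', mul_assoc, ihy, ← mul_assoc, ihx, mul_assoc]

lemma eq_mulLeft_of_comm_xop (v : E n) (h : ∀ i, xop i * v = v * xop i) :
    v = LinearMap.mulLeft ℂ (v 1) := by
  refine LinearMap.ext fun f => ?_
  have := congrArg (fun w : E n => w 1) (mulLeft_comm_of_comm_xop v h f)
  simp only [Module.End.mul_apply, LinearMap.mulLeft_apply, mul_one] at this
  rw [LinearMap.mulLeft_apply, ← this, mul_comm, ← mul_one f]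

lemma adc_dop_mulLeft (i : Fin n) (f : P n) :
    adc (dop i) (LinearMap.mulLeft ℂ f) = LinearMap.mulLeft ℂ (pderiv i f) := by
  refine LinearMap.ext fun p => ?_
  simp only [adc, LinearMap.sub_apply, Module.End.mul_apply, LinearMap.mulLeft_apply, dop_apply,
    pderiv_mul]
  ring

lemma weyl_nilp (i : Fin n) {v : E n} (hv : v ∈ WeylAlgebra n) :
    ∃ N, (adc (xop i))^[N] v = 0 := by
  have hv' : v ∈ Algebra.adjoin ℂ
      ((Set.range fun i : Fin n => (LinearMap.mulLeft ℂ (X i) : E n)) ∪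
       (Set.range fun i : Fin n => ((pderiv i).toLinearMap : E n))) := hv
  clear hv
  induction hv' using Algebra.adjoin_induction with
  | mem w hw =>
    rcases hw with ⟨j, rfl⟩ | ⟨j, rfl⟩
    · exact ⟨1, adc_xop_xop i j⟩
    · refine ⟨2, ?_⟩
      show adc (xop i) (adc (xop i) (dop j)) = 0
      rw [adc_xop_dop, adc_central]
  | algebraMap r => exact ⟨1, adc_central (xop i) r⟩
  | add x y hx hy ihx ihy =>
    obtain ⟨N, hN⟩ := ihx
    obtain ⟨M, hM⟩ := ihy
    exact ⟨max N M, by rw [adc_iter_add, adc_iter_eventually _ _ hN (le_max_left _ _),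
      adc_iter_eventually _ _ hM (le_max_right _ _), add_zero]⟩
  | mul x y hx hy ihx ihy =>
    obtain ⟨N, hN⟩ := ihx
    obtain ⟨M, hM⟩ := ihy
    exact ⟨N + M, adc_iter_mul _ _ _ _ _ hN hM⟩

end Operators

section InsideWeyl

variable {n : ℕ}

noncomputable def xg (i : Fin n) : WeylAlgebra n := ⟨xop i, xop_mem i⟩
noncomputable def dg (i : Fin n) : WeylAlgebra n := ⟨dop i, dop_mem i⟩

lemma val_adc_xg (i : Fin n) (a : WeylAlgebra n) :
    ((adc (xg i) a : WeylAlgebra n) : E n) = adc (xop i) (a : E n) := rfl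

lemma val_adc_dg (i : Fin n) (a : WeylAlgebra n) :
    ((adc (dg i) a : WeylAlgebra n) : E n) = adc (dop i) (a : E n) := rfl

lemma val_adc_iter_xg (i : Fin n) (N : ℕ) (a : WeylAlgebra n) :
    (((adc (xg i))^[N] a : WeylAlgebra n) : E n) = (adc (xop i))^[N] (a : E n) := by
  induction N generalizing a with
  | zero => rfl
  | succ N ih => rw [Function.iterate_succ_apply, Function.iterate_succ_apply, ih, val_adc_xg]

lemma nilp_xg (i : Fin n) (a : WeylAlgebra n) : ∃ N, (adc (xg i))^[N] a = 0 := by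
  obtain ⟨N, hN⟩ := weyl_nilp i a.2
  refine ⟨N, Subtype.ext ?_⟩
  rw [val_adc_iter_xg]
  exact hN

lemma xg_comm (i j : Fin n) : xg i * xg j = xg j * xg i :=
  Subtype.ext (mulLeft_comm_mulLeft (X i) (X j))

variable (I : TwoSidedIdeal (WeylAlgebra n))

lemma adc_mem_I (x a : WeylAlgebra n) (ha : a ∈ I) : adc x a ∈ I :=
  I.sub_mem (I.mul_mem_left _ _ ha) (I.mul_mem_right _ _ ha)

lemma adc_iter_mem_I (x : WeylAlgebra n) (N : ℕ) (a : WeylAlgebra n) (ha : a ∈ I) :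
    (adc x)^[N] a ∈ I := by
  induction N generalizing a with
  | zero => exact ha
  | succ N ih => rw [Function.iterate_succ_apply]; exact ih _ (adc_mem_I I x a ha)

lemma stepA (s : Finset (Fin n)) :
    ∀ a : WeylAlgebra n, a ∈ I → a ≠ 0 →
    ∃ b : WeylAlgebra n, b ∈ I ∧ b ≠ 0 ∧ (∀ i ∈ s, adc (xg i) b = 0) ∧
      (∀ j, adc (xg j) a = 0 → adc (xg j) b = 0) := by
  classical
  induction s using Finset.induction_on with
  | empty => exact fun a ha h0 => ⟨a, ha, h0, by simp, fun j h => h⟩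
  | @insert i s hi ih =>
    intro a ha h0
    obtain ⟨b, hbI, hb0, hbs, hbpres⟩ := ih a ha h0
    by_cases hc : adc (xg i) b = 0
    · refine ⟨b, hbI, hb0, ?_, hbpres⟩
      intro j hj
      rcases Finset.mem_insert.mp hj with rfl | hj
      · exact hc
      · exact hbs j hj
    · obtain hex := nilp_xg i b
      set N := Nat.find hex with hNdef
      have hN : (adc (xg i))^[N] b = 0 := Nat.find_spec hex
      have hN0 : N ≠ 0 := by
        intro h
        rw [h] at hN
        exact hb0 hN
      set c := (adc (xg i))^[N - 1] b with hcdef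
      have hc0 : c ≠ 0 := Nat.find_min hex (show N - 1 < N by omega)
      have hci : adc (xg i) c = 0 := by
        rw [hcdef, ← Function.iterate_succ_apply' (adc (xg i)) (N - 1) b,
          show (N - 1).succ = N from by omega]
        exact hN
      refine ⟨c, adc_iter_mem_I I _ _ b hbI, hc0, ?_, ?_⟩
      · intro j hj
        rcases Finset.mem_insert.mp hj with rfl | hj
        · exact hci
        · rw [hcdef, adc_swap_iter _ _ (xg_comm i j), hbs j hj, adc_iter_zero]
      · intro j hja
        rw [hcdef, adc_swap_iter _ _ (xg_comm i j), hbpres j hja, adc_iter_zero]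

set_option maxHeartbeats 1000000 in
set_option synthInstance.maxHeartbeats 400000 in
lemma const_case (b : WeylAlgebra n) (f : P n) (hbI : b ∈ I)
    (hbf : (b : E n) = LinearMap.mulLeft ℂ f) (hf0 : f ≠ 0) (h : f.totalDegree = 0) :
    (1 : WeylAlgebra n) ∈ I := by
  set c := coeff 0 f with hcdef
  have hc : c ≠ 0 := by
    intro h'
    apply hf0
    rw [eq_C_of_totalDegree_eq_zero f h, ← hcdef, h', map_zero]
  have hb : b = c • (1 : WeylAlgebra n) := by
    refine Subtype.ext ?_
    rw [hbf, eq_C_of_totalDegree_eq_zero f h]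
    refine LinearMap.ext fun p => ?_
    show C (coeff 0 f) * p = (c • (1 : WeylAlgebra n) : WeylAlgebra n).val p
    rw [← smul_eq_C_mul]
    rfl
  have hone : ((c⁻¹ • 1 : WeylAlgebra n)) * b = 1 := by
    rw [hb, smul_mul_assoc, one_mul, smul_smul, inv_mul_cancel₀ hc, one_smul]
  exact hone ▸ I.mul_mem_left _ _ hbI

lemma stepD : ∀ (d : ℕ) (b : WeylAlgebra n) (f : P n), b ∈ I →
    (b : E n) = LinearMap.mulLeft ℂ f → f ≠ 0 → f.totalDegree ≤ d →
    (1 : WeylAlgebra n) ∈ I := by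
  intro d
  induction d with
  | zero =>
    intro b f hbI hbf hf0 hdeg
    exact const_case I b f hbI hbf hf0 (Nat.le_zero.mp hdeg)
  | succ d ih =>
    intro b f hbI hbf hf0 hdeg
    by_cases h0 : f.totalDegree = 0
    · exact const_case I b f hbI hbf hf0 h0
    · obtain ⟨m, i, hm, hmi⟩ := exists_index_ne_zero f h0
      have hg0 : pderiv i f ≠ 0 := by
        intro hgz
        have hco := coeff_pderiv_sub i f m hm hmi
        rw [hgz] at hco
        simp only [coeff_zero] at hco
        have h1 : coeff m f ≠ 0 := mem_support_iff.mp hm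
        have h2 : ((m i : ℂ)) ≠ 0 := Nat.cast_ne_zero.mpr hmi
        exact h1 (by
          rcases mul_eq_zero.mp hco.symm with h | h
          · exact h
          · exact absurd h h2)
      have hgdeg : (pderiv i f).totalDegree ≤ d := by
        have := totalDegree_pderiv_lt i f h0
        omega
      refine ih (adc (dg i) b) (pderiv i f) (adc_mem_I I _ _ hbI) ?_ hg0 hgdeg
      rw [val_adc_dg, hbf, adc_dop_mulLeft]

end InsideWeyl

end WeylProof

set_option maxHeartbeats 1000000 in
set_option synthInstance.maxHeartbeats 400000 in
/-- Paper's Lemma 5.1.1: the Weyl algebra `Aₙ(ℂ)` is a simple ring: its only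
two-sided ideals are the zero ideal and the whole algebra. -/
theorem stmt_1 (n : ℕ) (hn : 0 < n) :
    ∀ I : TwoSidedIdeal (WeylAlgebra n), I = ⊥ ∨ I = ⊤ := by
  intro I
  rcases Classical.em (∃ a, a ∈ I ∧ a ≠ (0 : WeylAlgebra n)) with hI | hI
  · right
    obtain ⟨a, haI, ha0⟩ := hI
    obtain ⟨b, hbI, hb0, hbx, -⟩ := WeylProof.stepA I Finset.univ a haI ha0
    have hcomm : ∀ i, WeylProof.xop i * (b : WeylProof.E n) = (b : WeylProof.E n) * WeylProof.xop i := by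
      intro i
      have h := congrArg Subtype.val (hbx i (Finset.mem_univ i))
      rw [WeylProof.val_adc_xg] at h
      exact sub_eq_zero.mp h
    have hb := WeylProof.eq_mulLeft_of_comm_xop (b : WeylProof.E n) hcomm
    have hf0 : ((b : WeylProof.E n) 1) ≠ 0 := by
      intro h
      apply hb0
      refine Subtype.ext ?_
      rw [hb, h]
      simp [LinearMap.mulLeft_zero_eq_zero]

    exact TwoSidedIdeal.eq_top _ (WeylProof.stepD I _ b _ hbI hb hf0 le_rfl)
  · left
    push_neg at hI
    rw [eq_bot_iff]
    exact TwoSidedIdeal.le_iff.mpr fun x hx => (TwoSidedIdeal.mem_bot _).mpr (hI x hx)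
end

section
/- Every ℂ-algebra homomorphism from the Weyl algebra Aₙ(ℂ) into a nontrivial ring is injective. (The paper's claim in Example 5.1.4 that, since Aₙ(ℂ) is simple, any morphism to Space(Aₙ(ℂ)) is dominant, i.e. the related ℂ-algebra homomorphism from Aₙ(ℂ) is injective.) -/
open MvPolynomial

/-!
The Weyl algebra is simple; as `S` is nontrivial, the kernel of `f` is a proper two-sided ideal,
hence zero.

Every element of `Aₙ` is ad-nilpotent with respect to the `xᵢ`: the generators are
(`⁅xⱼ, xᵢ⁆ = 0` and `⁅∂ⱼ, xᵢ⁆` is a scalar), and ad-nilpotent elements form a subalgebra by the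
Leibniz rule. So in a nonzero two-sided ideal `I`, taking commutators with the `xᵢ` as long as they
are nonzero ends at a nonzero element commuting with every `xᵢ`, i.e. multiplication by a polynomial
`g ≠ 0`. Commutators with `∂ᵢ` differentiate `g` and lower its total degree, so `I` contains a
nonzero constant.
-/

theorem Ring.mul_lie {R : Type*} [Ring R] (a b c : R) : ⁅a * b, c⁆ = a * ⁅b, c⁆ + ⁅a, c⁆ * b := by
  simp only [Ring.lie_def]; noncomm_ring

theorem Ring.add_lie {R : Type*} [Ring R] (a b c : R) : ⁅a + b, c⁆ = ⁅a, c⁆ + ⁅b, c⁆ := by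
  simp only [Ring.lie_def]; noncomm_ring

section AdNilpotent

variable {R ι : Type*} [Ring R]

/-- `IsAdNilpotentOfOrder x k D`: every `(k+1)`-fold iterated commutator
`⁅⋯⁅⁅D, x i₀⁆, x i₁⁆, …, x iₖ⁆` vanishes. -/
def IsAdNilpotentOfOrder (x : ι → R) : ℕ → R → Prop
  | 0, D => ∀ i, Commute D (x i)
  | k + 1, D => ∀ i, IsAdNilpotentOfOrder x k ⁅D, x i⁆

namespace IsAdNilpotentOfOrder

variable {x : ι → R}

theorem zero (k : ℕ) : IsAdNilpotentOfOrder x k 0 := by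
  induction k with
  | zero => exact fun _ => Commute.zero_left _
  | succ k ih => intro i; rwa [(Commute.zero_left _).lie_eq]

theorem succ {k : ℕ} {D : R} (h : IsAdNilpotentOfOrder x k D) :
    IsAdNilpotentOfOrder x (k + 1) D := by
  induction k generalizing D with
  | zero => intro i; rw [(h i).lie_eq]; exact zero 0
  | succ k ih => exact fun i => ih (h i)

theorem mono {k l : ℕ} {D : R} (h : IsAdNilpotentOfOrder x k D) (hkl : k ≤ l) :
    IsAdNilpotentOfOrder x l D := by
  induction hkl with
  | refl => exact h
  | step _ ih => exact ih.succ

theorem add {k : ℕ} {D D' : R} (h : IsAdNilpotentOfOrder x k D)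
    (h' : IsAdNilpotentOfOrder x k D') : IsAdNilpotentOfOrder x k (D + D') := by
  induction k generalizing D D' with
  | zero => exact fun i => (h i).add_left (h' i)
  | succ k ih => intro i; rw [Ring.add_lie]; exact ih (h i) (h' i)

theorem mul {k l : ℕ} {D D' : R} (h : IsAdNilpotentOfOrder x k D)
    (h' : IsAdNilpotentOfOrder x l D') : IsAdNilpotentOfOrder x (k + l) (D * D') := by
  induction k generalizing l D D' with
  | zero =>
    induction l generalizing D' with
    | zero => exact fun i => (h i).mul_left (h' i)
    | succ l ih =>
      intro i
      rw [Ring.mul_lie, (h i).lie_eq, zero_mul, add_zero]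
      exact ih (h' i)
  | succ k ihk =>
    induction l generalizing D' with
    | zero =>
      intro i
      rw [Ring.mul_lie, (h' i).lie_eq, mul_zero, zero_add]
      exact ihk (h i) h'
    | succ l ihl =>
      intro i
      show IsAdNilpotentOfOrder x (k + 1 + l) _
      rw [Ring.mul_lie]
      refine add (ihl (h' i)) ?_
      exact (ihk (h i) h').mono (by omega)

theorem exists_commute_mem {k : ℕ} {a : R} (h : IsAdNilpotentOfOrder x k a)
    {I : TwoSidedIdeal R} (haI : a ∈ I) (ha : a ≠ 0) :
    ∃ b ∈ I, b ≠ 0 ∧ ∀ i, Commute b (x i) := by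
  induction k generalizing a with
  | zero => exact ⟨a, haI, ha, h⟩
  | succ k ih =>
    by_cases hcomm : ∀ i, Commute a (x i)
    · exact ⟨a, haI, ha, hcomm⟩
    obtain ⟨i, hi⟩ := not_forall.mp hcomm
    exact ih (h i) (I.sub_mem (I.mul_mem_right _ _ haI) (I.mul_mem_left _ _ haI))
      (mt commute_iff_lie_eq.mpr hi)

end IsAdNilpotentOfOrder

def adNilpotentSubalgebra (K : Type*) [CommSemiring K] [Algebra K R] (x : ι → R) :
    Subalgebra K R where
  carrier := {D | ∃ k, IsAdNilpotentOfOrder x k D}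
  mul_mem' := fun ⟨k, hk⟩ ⟨l, hl⟩ => ⟨k + l, hk.mul hl⟩
  add_mem' := fun ⟨k, hk⟩ ⟨l, hl⟩ =>
    ⟨max k l, (hk.mono (le_max_left k l)).add (hl.mono (le_max_right k l))⟩
  algebraMap_mem' c := ⟨0, fun _ => Algebra.commute_algebraMap_left c _⟩

end AdNilpotent

namespace MvPolynomial

variable {σ R : Type*} [CommSemiring R]

theorem totalDegree_pderiv_lt {g : MvPolynomial σ R} {i : σ} (h : pderiv i g ≠ 0) :
    (pderiv i g).totalDegree < g.totalDegree := by
  have key : ∀ m ∈ (pderiv i g).support, m.degree + 1 ≤ g.totalDegree := fun m hm => by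
    rw [mem_support_iff, coeff_pderiv] at hm
    calc m.degree + 1 = (m + Finsupp.single i 1).degree := by
          rw [map_add, Finsupp.degree_single]
      _ ≤ g.totalDegree := le_totalDegree (mem_support_iff.mpr (left_ne_zero_of_mul hm))
  obtain ⟨m₀, hm₀⟩ := support_nonempty.mpr h
  rw [totalDegree, Finset.sup_lt_iff ((Nat.succ_pos _).trans_le (key m₀ hm₀))]
  exact fun m hm => key m hm

variable [NoZeroDivisors R] [CharZero R]

theorem eq_C_of_forall_pderiv_eq_zero {g : MvPolynomial σ R} (h : ∀ i, pderiv i g = 0) :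
    g = C (coeff 0 g) := by
  classical
  ext m
  rw [coeff_C]
  split_ifs with hm
  · rw [hm]
  obtain ⟨i, hi⟩ : ∃ i, m i ≠ 0 := by
    by_contra! hc
    exact hm (Finsupp.ext hc).symm
  have hcoeff := coeff_pderiv (i := i) g (m - Finsupp.single i 1)
  rw [h i, coeff_zero, tsub_add_cancel_of_le (Finsupp.single_le_iff.mpr (by omega))] at hcoeff
  exact (mul_eq_zero.mp hcoeff.symm).resolve_right (by norm_cast)

theorem exists_C_ne_zero_of_forall_pderiv {p : MvPolynomial σ R → Prop}
    (hp : ∀ i g, p g → p (pderiv i g)) {g : MvPolynomial σ R} (hg : p g) (hg0 : g ≠ 0) :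
    ∃ c ≠ 0, p (C c) := by
  induction hd : g.totalDegree using Nat.strong_induction_on generalizing g with
  | _ d ih =>
    by_cases hder : ∀ i, pderiv i g = 0
    · rw [eq_C_of_forall_pderiv_eq_zero hder] at hg hg0
      exact ⟨_, fun h => hg0 (by rw [h, C_0]), hg⟩
    obtain ⟨i, hi⟩ := not_forall.mp hder
    exact ih _ (hd ▸ totalDegree_pderiv_lt hi) (hp i g hg) hi rfl

end MvPolynomial

theorem Module.End.eq_lmul_of_commute {R A : Type*} [CommSemiring R] [CommSemiring A]
    [Algebra R A] {s : Set A} (hs : Algebra.adjoin R s = ⊤) {D : Module.End R A}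
    (h : ∀ a ∈ s, Commute D (Algebra.lmul R A a)) : D = Algebra.lmul R A (D 1) := by
  have hall : ∀ a, Commute D (Algebra.lmul R A a) := by
    suffices ⊤ ≤ (Subalgebra.centralizer R {D}).comap (Algebra.lmul R A) from
      fun a => this (Algebra.mem_top (x := a)) D rfl
    rw [← hs, Algebra.adjoin_le_iff]
    exact fun a ha D' hD' => hD' ▸ h a ha
  ext a
  have := congrArg (· 1) (hall a).eq
  simpa [mul_comm] using this

theorem Subalgebra.eq_top_of_forall_mem_adjoin {R A : Type*} [CommSemiring R] [Semiring A]
    [Algebra R A] {s : Set A} {U : Subalgebra R (Algebra.adjoin R s)}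
    (h : ∀ a (ha : a ∈ s), ⟨a, Algebra.subset_adjoin ha⟩ ∈ U) : U = ⊤ := by
  rw [eq_top_iff, ← Algebra.adjoin_adjoin_coe_preimage, Algebra.adjoin_le_iff]
  exact fun a ha => h a ha

namespace WeylAlgebra

variable {n : ℕ}

theorem lmul_mem (g : MvPolynomial (Fin n) ℂ) : Algebra.lmul ℂ _ g ∈ WeylAlgebra n := by
  suffices ⊤ ≤ (WeylAlgebra n).comap (Algebra.lmul ℂ _) from this trivial
  rw [← adjoin_range_X, Algebra.adjoin_le_iff]
  rintro _ ⟨i, rfl⟩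
  exact Algebra.subset_adjoin (Or.inl ⟨i, rfl⟩)

noncomputable def ofPoly : MvPolynomial (Fin n) ℂ →ₐ[ℂ] WeylAlgebra n :=
  (Algebra.lmul ℂ _).codRestrict _ lmul_mem

noncomputable def pderivOp (i : Fin n) : WeylAlgebra n :=
  ⟨(pderiv i).toLinearMap, Algebra.subset_adjoin (Or.inr ⟨i, rfl⟩)⟩

theorem lie_pderivOp_ofPoly (i : Fin n) (g : MvPolynomial (Fin n) ℂ) :
    ⁅pderivOp i, ofPoly g⁆ = ofPoly (pderiv i g) :=
  Subtype.ext <| LinearMap.ext fun q => by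
    show pderiv i (g * q) - g * pderiv i q = pderiv i g * q
    rw [Derivation.leibniz, smul_eq_mul, smul_eq_mul]
    ring

theorem eq_ofPoly_of_commute {a : WeylAlgebra n} (h : ∀ i, Commute a (ofPoly (X i))) :
    a = ofPoly ((a : Module.End ℂ (MvPolynomial (Fin n) ℂ)) 1) :=
  Subtype.ext <| Module.End.eq_lmul_of_commute adjoin_range_X <| by
    rintro _ ⟨i, rfl⟩
    exact (h i).map (WeylAlgebra n).val

theorem mem_adNilpotentSubalgebra (a : WeylAlgebra n) :
    a ∈ adNilpotentSubalgebra ℂ fun i => ofPoly (X i) := by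
  have hpoly : ∀ g : MvPolynomial (Fin n) ℂ,
      IsAdNilpotentOfOrder (fun i => ofPoly (X i)) 0 (ofPoly g) :=
    fun g i => (Commute.all g (X i)).map ofPoly
  suffices adNilpotentSubalgebra ℂ (fun i => ofPoly (X i)) = ⊤ from this ▸ trivial
  refine Subalgebra.eq_top_of_forall_mem_adjoin ?_
  rintro _ (⟨i, rfl⟩ | ⟨i, rfl⟩)
  · exact ⟨0, hpoly (X i)⟩
  · refine ⟨1, fun j => ?_⟩
    show IsAdNilpotentOfOrder _ 0 ⁅pderivOp i, ofPoly (X j)⁆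
    rw [lie_pderivOp_ofPoly]
    exact hpoly _

theorem exists_ofPoly_mem {I : TwoSidedIdeal (WeylAlgebra n)} (hI : I ≠ ⊥) :
    ∃ g ≠ 0, ofPoly g ∈ I := by
  obtain ⟨a, haI, ha0⟩ := SetLike.exists_of_lt (bot_lt_iff_ne_bot.mpr hI)
  obtain ⟨k, hk⟩ := mem_adNilpotentSubalgebra a
  obtain ⟨b, hbI, hb0, hb⟩ := hk.exists_commute_mem haI ha0
  rw [eq_ofPoly_of_commute hb] at hbI hb0
  exact ⟨_, fun h => hb0 (by rw [h, map_zero]), hbI⟩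

instance : IsSimpleRing (WeylAlgebra n) := .of_eq_bot_or_eq_top fun I => by
  refine or_iff_not_imp_left.mpr fun hI => I.one_mem_iff.mp ?_
  obtain ⟨g, hg0, hgI⟩ := exists_ofPoly_mem hI
  obtain ⟨c, hc0, hcI⟩ := exists_C_ne_zero_of_forall_pderiv (p := (ofPoly · ∈ I))
    (fun i g hg => lie_pderivOp_ofPoly i g ▸
      I.sub_mem (I.mul_mem_left _ _ hg) (I.mul_mem_right _ _ hg)) hgI hg0
  rw [algHom_C] at hcI
  simpa [← map_mul, inv_mul_cancel₀ hc0] using I.mul_mem_left (algebraMap ℂ _ c⁻¹) _ hcI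

end WeylAlgebra

theorem stmt_2_general (n : ℕ) (S : Type*) [Ring S] [Nontrivial S] [Algebra ℂ S]
    (f : WeylAlgebra n →ₐ[ℂ] S) :
    Function.Injective f :=
  -- the ring structure is passed by hand: unification does not recover `Subalgebra.toRing` from
  -- the `Subalgebra.toSemiring` that `f` carries
  @RingHom.injective _ _ (WeylAlgebra n).toRing.toNonAssocRing _ _ _ f.toRingHom

/-- Since `Aₙ(ℂ)` is simple, every `ℂ`-algebra homomorphism from the Weyl algebra
`Aₙ(ℂ)` into a nontrivial ring is injective (Example 5.1.4). -/
theorem stmt_2 (n : ℕ) (hn : 0 < n) (S : Type*) [Ring S] [Nontrivial S] [Algebra ℂ S]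
    (f : WeylAlgebra n →ₐ[ℂ] S) :
    Function.Injective f :=
  stmt_2_general n S f
end

section
/- For every k with 0 ≤ k ≤ n, the ℂ-algebra homomorphism f₍ₖ₎♯ : MvPolynomial (Fin n) ℂ → Module.End ℂ P determined (via MvPolynomial.aeval) by sending the variable yᵢ to the multiplication operator xᵢ when i < k and to the derivation operator ∂ᵢ when i ≥ k, is injective. (This is the paper's claim in Example 5.1.4 that each f₍ₖ₎ : Space(Aₙ(ℂ)) → 𝔸ⁿ is a dominant morphism.) -/
/-!
Let `p i` say that the variable `yᵢ` is sent to `xᵢ` rather than to `∂ᵢ`. The monomial `y^m` then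
acts as `x^(m.filter p) ∂^(m.filter (¬ p ·))`: it sends `x^t` to `x^(m.filter p + (t - m.filter (¬ p ·)))`
times a product of falling factorials `(t j).descFactorial (m j)`, which vanishes unless
`m.filter (¬ p ·) ≤ t`. Hence, applying `f q` to `x^(m.filter (¬ p ·))` and reading off the
coefficient of `x^(m.filter p)`, only the term `y^m` of `q` survives, with the nonzero factor
`∏ (m j)!`; so `f q = 0` forces every coefficient of `q` to vanish.
-/

open MvPolynomial

theorem Finsupp.prod_descFactorial_ne_zero_iff {σ : Type*} {m t : σ →₀ ℕ} :
    (m.prod fun j e => (t j).descFactorial e) ≠ 0 ↔ m ≤ t := by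
  simp [Nat.descFactorial_eq_zero_iff_lt, Finsupp.le_iff]

theorem Finsupp.eq_of_filter_add_tsub_filter_not {σ : Type*} (p : σ → Prop) [DecidablePred p]
    {m m' : σ →₀ ℕ} (hle : m'.filter (¬ p ·) ≤ m.filter (¬ p ·))
    (h : m'.filter p + (m.filter (¬ p ·) - m'.filter (¬ p ·)) = m.filter p) : m' = m := by
  ext j
  have hj := DFunLike.congr_fun h j
  have hlej := hle j
  simp only [Finsupp.coe_add, Finsupp.coe_tsub, Pi.add_apply, Pi.sub_apply,
    Finsupp.filter_apply] at hj hlej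
  split_ifs at hj hlej <;> omega

namespace MvPolynomial

variable {σ R : Type*}

section CommSemiring

variable [CommSemiring R]

theorem pderiv_pow_monomial (i : σ) (b : ℕ) (u : σ →₀ ℕ) (a : R) :
    ((pderiv i).toLinearMap ^ b : Module.End R (MvPolynomial σ R)) (monomial u a) =
      (u i).descFactorial b • monomial (u - Finsupp.single i b) a := by
  induction b with
  | zero => simp
  | succ b ih =>
    rw [pow_succ', Module.End.mul_apply, ih, map_nsmul, Derivation.coeFn_coe, pderiv_monomial,
      tsub_tsub, ← Finsupp.single_add, Nat.descFactorial_succ, mul_comm (u i - b), mul_smul,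
      Finsupp.tsub_apply, Finsupp.single_eq_same, smul_monomial (u i - b), nsmul_eq_mul _ a,
      mul_comm a]

noncomputable def mulXOrPDeriv (p : σ → Prop) [DecidablePred p] (i : σ) : Module.End R (MvPolynomial σ R) :=
  if p i then LinearMap.mulLeft R (X i) else (pderiv i).toLinearMap

variable (p : σ → Prop) [DecidablePred p] {f : MvPolynomial σ R →ₐ[R] Module.End R (MvPolynomial σ R)}

theorem map_monomial_one_of_forall_mem_support (hf : ∀ i, f (X i) = mulXOrPDeriv p i)
    {m : σ →₀ ℕ} (hm : ∀ j ∈ m.support, p j) :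
    f (monomial m 1) = LinearMap.mulLeft R (monomial m 1) := by
  induction m using Finsupp.induction with
  | zero => simp [monomial_zero', LinearMap.mulLeft_one, Module.End.one_eq_id]
  | single_add i b m hi hb ih =>
    have hpi : p i := hm i (by simp [hb, Finsupp.notMem_support_iff.mp hi])
    rw [monomial_single_add, map_mul, map_pow, hf, mulXOrPDeriv, if_pos hpi,
      ih fun j hj => hm j (by simp_all), LinearMap.pow_mulLeft, LinearMap.mulLeft_mul,
      Module.End.mul_eq_comp]

theorem map_monomial_one_apply_monomial_one_of_forall_mem_support
    (hf : ∀ i, f (X i) = mulXOrPDeriv p i) {m : σ →₀ ℕ} (hm : ∀ j ∈ m.support, ¬ p j)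
    (t : σ →₀ ℕ) :
    f (monomial m 1) (monomial t 1) =
      (m.prod fun j e => (t j).descFactorial e) • monomial (t - m) 1 := by
  induction m using Finsupp.induction with
  | zero => simp [monomial_zero']
  | single_add i b m hi hb ih =>
    have hpi : ¬ p i := hm i (by simp [hb, Finsupp.notMem_support_iff.mp hi])
    have hdisj : Disjoint (Finsupp.single i b).support m.support := by
      simpa [Finsupp.support_single, hb] using hi
    rw [monomial_single_add, map_mul, map_pow, hf, mulXOrPDeriv, if_neg hpi, Module.End.mul_apply,
      ih fun j hj => hm j (by simp_all), map_nsmul, pderiv_pow_monomial, smul_smul,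
      Finsupp.prod_add_index_of_disjoint hdisj,
      Finsupp.prod_single_index (h := fun j e => (t j).descFactorial e) (Nat.descFactorial_zero _),
      Finsupp.tsub_apply, Finsupp.notMem_support_iff.mp hi, tsub_zero, tsub_tsub, add_comm m,
      mul_comm]

theorem map_monomial_one_apply_monomial_one (hf : ∀ i, f (X i) = mulXOrPDeriv p i)
    (m t : σ →₀ ℕ) :
    f (monomial m 1) (monomial t 1) =
      ((m.filter (¬ p ·)).prod fun j e => (t j).descFactorial e) •
        monomial (m.filter p + (t - m.filter (¬ p ·))) 1 := by
  have hsplit : monomial m (1 : R) = monomial (m.filter p) 1 * monomial (m.filter (¬ p ·)) 1 := by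
    rw [monomial_mul, one_mul, Finsupp.filter_add_filter_not]
  rw [hsplit, map_mul, Module.End.mul_apply,
    map_monomial_one_apply_monomial_one_of_forall_mem_support p hf
      (by simp [Finsupp.support_filter]),
    map_nsmul, map_monomial_one_of_forall_mem_support p hf (by simp [Finsupp.support_filter]),
    LinearMap.mulLeft_apply, monomial_mul, one_mul]

theorem coeff_filter_map_apply_monomial_filter_not (hf : ∀ i, f (X i) = mulXOrPDeriv p i)
    (m : σ →₀ ℕ) (q : MvPolynomial σ R) :
    coeff (m.filter p) (f q (monomial (m.filter (¬ p ·)) 1)) =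
      ((m.filter (¬ p ·)).prod fun _ e => e.factorial) • coeff m q := by
  induction q using MvPolynomial.induction_on' with
  | add q r hq hr => simp only [map_add, LinearMap.add_apply, coeff_add, smul_add, hq, hr]
  | monomial m' a =>
    classical
    rw [← mul_one a, ← smul_eq_mul, ← smul_monomial, map_smul, LinearMap.smul_apply,
      map_monomial_one_apply_monomial_one p hf, coeff_smul, coeff_smul, coeff_smul, coeff_monomial,
      coeff_monomial]
    by_cases hm : m' = m
    · subst hm
      rw [tsub_self, add_zero, if_pos rfl, if_pos rfl,
        Finsupp.prod_congr fun j _ => Nat.descFactorial_self _, smul_comm a]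
    · rw [if_neg hm, smul_zero, smul_zero]
      obtain hD | hD :=
        eq_or_ne ((m'.filter (¬ p ·)).prod fun j e => (m.filter (¬ p ·) j).descFactorial e) 0
      · rw [hD, zero_smul, smul_zero]
      · have hle := Finsupp.prod_descFactorial_ne_zero_iff.mp hD
        rw [if_neg fun h => hm (Finsupp.eq_of_filter_add_tsub_filter_not p hle h), smul_zero,
          smul_zero]

end CommSemiring

theorem injective_of_map_X_eq_mulXOrPDeriv [CommRing R] [IsAddTorsionFree R]
    (p : σ → Prop) [DecidablePred p] {f : MvPolynomial σ R →ₐ[R] Module.End R (MvPolynomial σ R)}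
    (hf : ∀ i, f (X i) = mulXOrPDeriv p i) :
    Function.Injective f := by
  rw [injective_iff_map_eq_zero]
  intro q hq
  ext m
  have hcoeff := coeff_filter_map_apply_monomial_filter_not p hf m q
  rw [hq, LinearMap.zero_apply, coeff_zero, eq_comm, smul_eq_zero] at hcoeff
  exact hcoeff.resolve_left (Finsupp.prod_ne_zero_iff.mpr fun _ _ => Nat.factorial_ne_zero _)

end MvPolynomial

theorem stmt_4_general (n : ℕ) (k : ℕ)
    (f : MvPolynomial (Fin n) ℂ →ₐ[ℂ] Module.End ℂ (MvPolynomial (Fin n) ℂ))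
    (hf : ∀ i : Fin n,
      f (X i) =
        if (i : ℕ) < k then
          (LinearMap.mulLeft ℂ (X i) : Module.End ℂ (MvPolynomial (Fin n) ℂ))
        else
          ((pderiv i).toLinearMap : Module.End ℂ (MvPolynomial (Fin n) ℂ))) :
    Function.Injective f :=
  injective_of_map_X_eq_mulXOrPDeriv (fun i : Fin n => (i : ℕ) < k) hf

/-- Example 5.1.4: for `0 ≤ k ≤ n`, the `ℂ`-algebra homomorphism
`f₍ₖ₎♯ : ℂ[y₁,…,yₙ] → End ℂ (ℂ[x₁,…,xₙ])` determined by sending the variable `yᵢ`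
to the multiplication operator `xᵢ` when `i < k` and to the partial-derivative
operator `∂ᵢ` when `i ≥ k`, is injective (i.e. each morphism
`f₍ₖ₎ : Space Aₙ(ℂ) → 𝔸ⁿ` is dominant).  (Since `Module.End ℂ P` is
noncommutative, the homomorphism is specified by its values on the variables.) -/
theorem stmt_4 (n : ℕ) (hn : 0 < n) (k : ℕ) (hk : k ≤ n)
    (f : MvPolynomial (Fin n) ℂ →ₐ[ℂ] Module.End ℂ (MvPolynomial (Fin n) ℂ))
    (hf : ∀ i : Fin n,
      f (X i) =
        if (i : ℕ) < k then
          (LinearMap.mulLeft ℂ (X i) : Module.End ℂ (MvPolynomial (Fin n) ℂ))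
        else
          ((pderiv i).toLinearMap : Module.End ℂ (MvPolynomial (Fin n) ℂ))) :
    Function.Injective f :=
  stmt_4_general n k f hf
end

section
/- The ℂ-vector space S := { B ∈ Matrix (Fin 2) (Fin 2) ℂ[z] : λ • B′ + A*B − B*A = 0 } of polynomial solutions of the system λ∂_zB + [A,B] = 0 has dimension 4 over ℂ (i.e. Module.finrank ℂ S = 4) if and only if (a₁ − a₄)² + 4·a₂·a₃ = 0. (The precise form of the paper's claim in Example 5.1.11 that the homogeneous linear ODE system λ∂_zB + [A,B] = 0 admits a full system of polynomial solutions exactly when A satisfies (a₁−a₄)² + 4a₂a₃ = 0.) -/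
/-!
Comparing coefficients, `λ (n + 1) Bₙ₊₁ + [A, Bₙ] = 0`, so a solution is determined by `B₀` and
is the power series `exp (-z • ad A / λ) B₀`; it is a polynomial exactly when `(ad A)ⁿ B₀ = 0`
for large `n`. Hence `S` is isomorphic to the generalized kernel of `ad A`, which is all of
`M₂(ℂ)` iff `ad A` is nilpotent. Shifting `A` by half its trace gives a matrix whose square is the
scalar `Δ / 4`, `Δ = (a₁ - a₄)² + 4 a₂ a₃`, whence `(ad A)³ = Δ • ad A`. If `Δ ≠ 0` and `ad A`
is nilpotent, `Δ - (ad A)²` is invertible and kills `ad A`, so `A` is scalar and `Δ = 0` after all.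
-/

open Polynomial

/-- The matrix `A = !![a₁, a₂; a₃, a₄]`, regarded as a matrix over `ℂ[z]`
via the constant embedding `C : ℂ → ℂ[z]`. -/
noncomputable def Amat (a₁ a₂ a₃ a₄ : ℂ) : Matrix (Fin 2) (Fin 2) (Polynomial ℂ) :=
  !![C a₁, C a₂; C a₃, C a₄]

/-- Entrywise derivative `B′` of a matrix of polynomials. -/
noncomputable def matD (B : Matrix (Fin 2) (Fin 2) (Polynomial ℂ)) :
    Matrix (Fin 2) (Fin 2) (Polynomial ℂ) :=
  B.map fun q => derivative q

open Module

section Ad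

variable (K : Type*) {R : Type*} [CommRing K] [Ring R] [Algebra K R]

noncomputable def ad (a : R) : End K R := LinearMap.mulLeft K a - LinearMap.mulRight K a

@[simp]
theorem ad_apply (a x : R) : ad K a x = a * x - x * a := rfl

variable {K}

theorem ad_sub_algebraMap (a : R) (c : K) : ad K (a - algebraMap K R c) = ad K a := by
  ext x
  simp [sub_mul, mul_sub, Algebra.commutes]

theorem ad_pow_three_of_mul_self_eq_algebraMap {b : R} {c : K} (hb : b * b = algebraMap K R c) :
    ad K b ^ 3 = (4 * c) • ad K b := by
  ext x
  have expand : (ad K b ^ 3) x = (b * b) * (b * x) - 3 • ((b * b) * (x * b)) +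
      3 • ((b * x) * (b * b)) - (x * b) * (b * b) := by
    simp only [pow_succ, pow_zero, one_mul, Module.End.mul_apply, ad_apply]
    noncomm_ring
  rw [expand, hb, LinearMap.smul_apply, ad_apply, Algebra.algebraMap_eq_smul_one]
  simp only [smul_mul_assoc, mul_smul_comm, one_mul, mul_one]
  module

end Ad

theorem eq_zero_of_isNilpotent_of_pow_three_eq_smul {K R : Type*} [Field K] [Ring R]
    [Algebra K R] {T : R} {c : K} (hT : IsNilpotent T) (h : T ^ 3 = c • T) (hc : c ≠ 0) :
    T = 0 := by
  have hunit : IsUnit (algebraMap K R c - T ^ 2) := by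
    rw [sub_eq_add_neg]
    exact (hT.pow_succ 1).neg.isUnit_add_left_of_commute
      ((isUnit_iff_ne_zero.2 hc).map (algebraMap K R)) (Algebra.commutes c _).symm
  refine hunit.mul_right_eq_zero.1 ?_
  rw [sub_mul, ← Algebra.smul_def, ← h, ← pow_succ, sub_self]

theorem Module.End.finrank_ker_pow_finrank_eq_iff {K V : Type*} [Field K] [AddCommGroup V]
    [Module K V] [FiniteDimensional K V] (f : End K V) :
    finrank K (LinearMap.ker (f ^ finrank K V)) = finrank K V ↔ IsNilpotent f := by
  constructor
  · intro h
    exact ⟨_, LinearMap.ker_eq_top.1 (Submodule.eq_top_of_finrank_eq h)⟩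
  · rintro ⟨n, hn⟩
    have : LinearMap.ker (f ^ finrank K V) = ⊤ :=
      eq_top_iff.2 fun x _ => f.ker_pow_le_ker_pow_finrank n (by simp [hn])
    rw [this, finrank_top]

theorem matPolyEquiv_map_derivative {n R : Type*} [Fintype n] [DecidableEq n] [CommSemiring R]
    (B : Matrix n n R[X]) : matPolyEquiv (B.map derivative) = derivative (matPolyEquiv B) := by
  ext k i j
  simp only [matPolyEquiv_coeff_apply, Matrix.map_apply, coeff_derivative, ← Nat.cast_succ,
    ← nsmul_eq_mul', Matrix.smul_apply]

section PolySolutions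

variable {K R : Type*} [Field K] [Ring R] [Algebra K R] {lam : K} {a : R}

noncomputable def polySolutions (lam : K) (a : R) : Submodule K R[X] :=
  LinearMap.ker (lam • (derivative : R[X] →ₗ[R] R[X]).restrictScalars K + ad K (C a))

theorem mem_polySolutions {p : R[X]} :
    p ∈ polySolutions lam a ↔ lam • derivative p + (C a * p - p * C a) = 0 := by
  simp [polySolutions]

theorem mem_polySolutions_iff_coeff {p : R[X]} :
    p ∈ polySolutions lam a ↔
      ∀ n : ℕ, (lam * (n + 1)) • p.coeff (n + 1) + ad K a (p.coeff n) = 0 := by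
  rw [mem_polySolutions, Polynomial.ext_iff]
  refine forall_congr' fun n => ?_
  rw [coeff_add, coeff_smul, coeff_derivative, coeff_sub, coeff_C_mul, coeff_mul_C, ad_apply,
    mul_smul, ← Nat.cast_succ, ← Nat.cast_succ, Nat.cast_smul_eq_nsmul, nsmul_eq_mul',
    coeff_zero]

noncomputable def expCoeff (lam : K) (n : ℕ) : K := (-lam)⁻¹ ^ n / n.factorial

theorem expCoeff_zero (lam : K) : expCoeff lam 0 = 1 := by simp [expCoeff]

variable [CharZero K]

theorem expCoeff_ne_zero (hlam : lam ≠ 0) (n : ℕ) : expCoeff lam n ≠ 0 := by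
  simp [expCoeff, hlam, n.factorial_ne_zero]

theorem mul_expCoeff_succ (hlam : lam ≠ 0) (n : ℕ) :
    lam * (n + 1) * expCoeff lam (n + 1) = -expCoeff lam n := by
  have hfact := n.factorial_ne_zero
  have hsucc : (n : K) + 1 ≠ 0 := n.cast_add_one_ne_zero
  simp only [expCoeff, Nat.factorial_succ, pow_succ, Nat.cast_mul, Nat.cast_succ]
  field_simp

theorem mem_polySolutions_iff_coeff_eq (hlam : lam ≠ 0) {p : R[X]} :
    p ∈ polySolutions lam a ↔
      ∀ n : ℕ, p.coeff n = expCoeff lam n • (ad K a ^ n) (p.coeff 0) := by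
  rw [mem_polySolutions_iff_coeff]
  constructor
  · intro h n
    induction n with
    | zero => simp [expCoeff_zero]
    | succ n ih =>
      have hn : lam * (n + 1) ≠ 0 := mul_ne_zero hlam n.cast_add_one_ne_zero
      apply smul_right_injective R hn
      beta_reduce
      rw [smul_smul, mul_expCoeff_succ hlam, eq_neg_of_add_eq_zero_left (h n), ih, map_smul,
        ← Module.End.mul_apply, ← pow_succ', neg_smul]
  · intro h n
    rw [h, h n, map_smul, ← Module.End.mul_apply, ← pow_succ', smul_smul, ← add_smul,
      mul_expCoeff_succ hlam, neg_add_cancel, zero_smul]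

theorem eq_of_mem_polySolutions_of_coeff_zero_eq (hlam : lam ≠ 0) {p q : R[X]}
    (hp : p ∈ polySolutions lam a) (hq : q ∈ polySolutions lam a) (h0 : p.coeff 0 = q.coeff 0) :
    p = q := by
  ext n
  rw [(mem_polySolutions_iff_coeff_eq hlam).1 hp, (mem_polySolutions_iff_coeff_eq hlam).1 hq, h0]

variable [FiniteDimensional K R]

theorem map_lcoeff_zero_polySolutions (hlam : lam ≠ 0) :
    (polySolutions lam a).map ((lcoeff R 0).restrictScalars K) =
      LinearMap.ker (ad K a ^ finrank K R) := by
  ext x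
  simp only [Submodule.mem_map, LinearMap.restrictScalars_apply, lcoeff_apply]
  constructor
  · rintro ⟨p, hp, rfl⟩
    have hN := (mem_polySolutions_iff_coeff_eq hlam).1 hp (p.natDegree + 1)
    rw [coeff_eq_zero_of_natDegree_lt p.natDegree.lt_succ_self, eq_comm,
      smul_eq_zero_iff_right (expCoeff_ne_zero hlam _)] at hN
    exact Module.End.ker_pow_le_ker_pow_finrank _ _ hN
  · intro hx
    set p : R[X] :=
      ∑ k ∈ Finset.range (finrank K R), monomial k (expCoeff lam k • (ad K a ^ k) x)
    have hcoeff : ∀ n, p.coeff n = expCoeff lam n • (ad K a ^ n) x := by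
      intro n
      simp only [p, finsetSum_coeff, coeff_monomial, Finset.sum_ite_eq', Finset.mem_range]
      split_ifs with hn
      · rfl
      · have hxn : x ∈ LinearMap.ker (ad K a ^ n) := by
          rwa [Module.End.ker_pow_eq_ker_pow_finrank_of_le (not_lt.1 hn)]
        rw [LinearMap.mem_ker.1 hxn, smul_zero]
    have hp0 : p.coeff 0 = x := by
      rw [hcoeff, pow_zero, expCoeff_zero, one_smul, Module.End.one_apply]
    exact ⟨p, (mem_polySolutions_iff_coeff_eq hlam).2 fun n => by rw [hcoeff, hp0], hp0⟩

theorem finrank_polySolutions (hlam : lam ≠ 0) :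
    finrank K (polySolutions lam a) = finrank K (LinearMap.ker (ad K a ^ finrank K R)) := by
  let f := ((lcoeff R 0).restrictScalars K).domRestrict (polySolutions lam a)
  have hf : Function.Injective f := fun p q h =>
    Subtype.ext (eq_of_mem_polySolutions_of_coeff_zero_eq hlam p.2 q.2 h)
  rw [← LinearMap.finrank_range_of_inj hf, LinearMap.range_domRestrict,
    map_lcoeff_zero_polySolutions hlam]

end PolySolutions

section FinTwo

variable {K : Type*} [Field K]

theorem mul_self_sub_half_trace_fin_two [CharZero K] (a₁ a₂ a₃ a₄ : K) :
    (!![a₁, a₂; a₃, a₄] - algebraMap K _ ((a₁ + a₄) / 2)) *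
        (!![a₁, a₂; a₃, a₄] - algebraMap K _ ((a₁ + a₄) / 2)) =
      algebraMap K (Matrix (Fin 2) (Fin 2) K) (((a₁ - a₄) ^ 2 + 4 * a₂ * a₃) / 4) := by
  ext i j
  fin_cases i <;> fin_cases j <;>
    simp [Matrix.mul_apply, Fin.sum_univ_two, Matrix.algebraMap_eq_diagonal] <;> field_simp <;> ring

theorem ad_pow_three_fin_two [CharZero K] (a₁ a₂ a₃ a₄ : K) :
    ad K !![a₁, a₂; a₃, a₄] ^ 3 = ((a₁ - a₄) ^ 2 + 4 * a₂ * a₃) • ad K !![a₁, a₂; a₃, a₄] := by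
  rw [← ad_sub_algebraMap _ ((a₁ + a₄) / 2),
    ad_pow_three_of_mul_self_eq_algebraMap (mul_self_sub_half_trace_fin_two a₁ a₂ a₃ a₄)]
  congr 1
  ring

theorem discr_eq_zero_of_ad_eq_zero_fin_two {a₁ a₂ a₃ a₄ : K}
    (h : ad K !![a₁, a₂; a₃, a₄] = 0) : (a₁ - a₄) ^ 2 + 4 * a₂ * a₃ = 0 := by
  have h₃ : a₃ = 0 := by simpa using congr($h !![0, 1; 0, 0] 1 1)
  have h₁₄ : a₁ = a₄ := by simpa [sub_eq_zero] using congr($h !![0, 1; 0, 0] 0 1)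
  have h₂ : a₂ = 0 := by simpa using congr($h !![0, 0; 1, 0] 0 0)
  simp [h₂, h₃, h₁₄]

theorem isNilpotent_ad_fin_two_iff [CharZero K] {a₁ a₂ a₃ a₄ : K} :
    IsNilpotent (ad K !![a₁, a₂; a₃, a₄]) ↔ (a₁ - a₄) ^ 2 + 4 * a₂ * a₃ = 0 := by
  constructor
  · intro hnil
    by_contra hΔ
    exact hΔ (discr_eq_zero_of_ad_eq_zero_fin_two
      (eq_zero_of_isNilpotent_of_pow_three_eq_smul hnil (ad_pow_three_fin_two ..) hΔ))
  · intro hΔ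
    exact ⟨3, by rw [ad_pow_three_fin_two, hΔ, zero_smul]⟩

end FinTwo

/-- Example 5.1.11: for `λ ≠ 0`, the `ℂ`-vector space
`S = {B : Matrix (Fin 2) (Fin 2) ℂ[z] | λ•B′ + A*B − B*A = 0}` of polynomial
solutions of `λ∂_zB + [A,B] = 0` has dimension `4` over `ℂ` if and only if
`(a₁ − a₄)² + 4a₂a₃ = 0`. -/
theorem stmt_7 (lam a₁ a₂ a₃ a₄ : ℂ) (hlam : lam ≠ 0)
    (S : Submodule ℂ (Matrix (Fin 2) (Fin 2) (Polynomial ℂ)))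
    (hS : ∀ B : Matrix (Fin 2) (Fin 2) (Polynomial ℂ),
      B ∈ S ↔ lam • matD B + Amat a₁ a₂ a₃ a₄ * B - B * Amat a₁ a₂ a₃ a₄ = 0) :
    Module.finrank ℂ S = 4 ↔ (a₁ - a₄) ^ 2 + 4 * a₂ * a₃ = 0 := by
  let e := (matPolyEquiv : Matrix (Fin 2) (Fin 2) ℂ[X] ≃ₐ[ℂ] _).toLinearEquiv
  have hA : Amat a₁ a₂ a₃ a₄ = (!![a₁, a₂; a₃, a₄] : Matrix (Fin 2) (Fin 2) ℂ).map C := by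
    ext i j
    fin_cases i <;> fin_cases j <;> rfl
  have hSP : S = (polySolutions lam !![a₁, a₂; a₃, a₄]).comap e.toLinearMap := by
    ext B
    rw [hS, Submodule.mem_comap, mem_polySolutions, ← e.injective.eq_iff]
    simp [e, hA, matD, matPolyEquiv_map_derivative, add_sub_assoc]
  rw [hSP, Submodule.comap_equiv_eq_map_symm, LinearEquiv.finrank_map_eq,
    finrank_polySolutions hlam, ← isNilpotent_ad_fin_two_iff,
    ← Module.End.finrank_ker_pow_finrank_eq_iff, finrank_matrix]
  simp
end

section
/- Let λ ∈ ℂ and let A, B ∈ Matrix (Fin 2) (Fin 2) ℂ[z] satisfy λ • B′ + A*B − B*A = 0. Let ν ∈ ℂ and let s : Fin 2 → ℂ[z] be an eigenvector: B.mulVec s = (C ν) • s. Then the vector t := λ • s′ + A.mulVec s (where s′ applies Polynomial.derivative componentwise) is again an eigenvector for the same eigenvalue: B.mulVec t = (C ν) • t. In other words, the eigenspace Ker(B − ν) ⊆ ℂ[z]² is invariant under the operator λ∂_z + A. (The invariance claim in Case (a) of Example 5.1.11, showing N₋ = Ker(B − ν₋) is invariant under φ♯(S_λ).) -/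
open Polynomial
/-- Example 5.1.11, Case (a): if `λ • B′ + A*B − B*A = 0` and `s` is an
eigenvector of `B` with eigenvalue `ν` (`B.mulVec s = (C ν) • s`), then
`t = λ•s′ + A.mulVec s` is again an eigenvector of `B` with eigenvalue `ν`;
i.e. the eigenspace `Ker (B − ν)` is invariant under the operator `λ∂_z + A`. -/
theorem stmt_9 (lam : ℂ) (A B : Matrix (Fin 2) (Fin 2) (Polynomial ℂ))
    (hB : lam • (B.map fun q => derivative q) + A * B - B * A = 0)
    (ν : ℂ) (s : Fin 2 → Polynomial ℂ) (hs : B.mulVec s = C ν • s) :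
    B.mulVec (lam • (fun i => derivative (s i)) + A.mulVec s) =
      C ν • (lam • (fun i => derivative (s i)) + A.mulVec s) := by
  have h00 := congrFun (congrFun hB 0) 0
  have h01 := congrFun (congrFun hB 0) 1
  have h10 := congrFun (congrFun hB 1) 0
  have h11 := congrFun (congrFun hB 1) 1
  have hs0 := congrFun hs 0
  have hs1 := congrFun hs 1
  simp only [Matrix.mulVec, dotProduct, Fin.sum_univ_two, Pi.add_apply, Pi.smul_apply,
    Matrix.add_apply, Matrix.sub_apply, Matrix.mul_apply, Matrix.map_apply, Matrix.smul_apply,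
    smul_eq_mul, Matrix.zero_apply, Polynomial.smul_eq_C_mul] at h00 h01 h10 h11 hs0 hs1
  have d0 := congrArg derivative hs0
  have d1 := congrArg derivative hs1
  simp only [derivative_add, derivative_mul, derivative_C, zero_mul, zero_add] at d0 d1
  funext i
  fin_cases i <;>
    simp only [Matrix.mulVec, dotProduct, Fin.sum_univ_two, Pi.add_apply, Pi.smul_apply,
      Fin.isValue, Fin.mk_zero, Fin.mk_one, smul_eq_mul, Polynomial.smul_eq_C_mul]
  · linear_combination (C lam) * d0 - s 0 * h00 - s 1 * h01 + A 0 0 * hs0 + A 0 1 * hs1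
  · linear_combination (C lam) * d1 - s 0 * h10 - s 1 * h11 + A 1 0 * hs0 + A 1 1 * hs1
end

section
/- Let ν₋, ν₊ ∈ ℂ with ν₋ ≠ ν₊, and let B ∈ Matrix (Fin 2) (Fin 2) ℂ[z] have characteristic polynomial (X − C ν₋)·(X − C ν₊). Then the ℂ[z]-submodules N₋ := Ker(Matrix.toLin' B − ν₋ • id) and N₊ := Ker(Matrix.toLin' B − ν₊ • id) of ℂ[z]² = (Fin 2 → ℂ[z]) are complementary (IsCompl N₋ N₊, so ℂ[z]² = N₋ ⊕ N₊), and each of N₋ and N₊ is a free ℂ[z]-module of rank 1. (The claims in Case (a) of Example 5.1.11 that N₋ and N₊ are rank-1 ℂ[z]-submodules of ℂ[z] ⊕ ℂ[z] and that φ_*E = N₋ ⊕ N₊.) -/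
/-!
By Cayley–Hamilton, `(B - ν₋)(B - ν₊) = 0`, and since `ν₋ - ν₊` is a unit of `ℂ[z]` the
polynomials `X - ν₋` and `X - ν₊` are coprime, so `ℂ[z]²` is the direct sum of the two kernels.
Neither kernel is zero, since otherwise `B` would be the scalar `ν₊` (resp. `ν₋`) and
`det (ν₋ - B) = (ν₋ - ν₊)²` could not vanish. Over the PID `ℂ[z]` the kernels are free, and their
ranks are nonzero and add up to `2`.
-/

open Polynomial

theorem aeval_X_sub_C_eq_sub_smul_id {R M : Type*} [CommRing R] [AddCommGroup M] [Module R M]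
    (f : Module.End R M) (a : R) : aeval f (X - C a) = f - a • LinearMap.id := by
  rw [map_sub, aeval_X, aeval_C, Algebra.algebraMap_eq_smul_one, Module.End.one_eq_id]

section Eigenspaces

variable {R M : Type*} [CommRing R] [AddCommGroup M] [Module R M] [Module.Free R M]
  [Module.Finite R M] {f : Module.End R M} {a b : R}

theorem isCompl_ker_sub_smul_id_of_charpoly_eq (hab : IsUnit (a - b))
    (hf : f.charpoly = (X - C a) * (X - C b)) :
    IsCompl (LinearMap.ker (f - a • LinearMap.id)) (LinearMap.ker (f - b • LinearMap.id)) := by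
  have hcop := isCoprime_X_sub_C_of_isUnit_sub hab
  simp only [← aeval_X_sub_C_eq_sub_smul_id]
  refine ⟨disjoint_ker_aeval_of_isCoprime f hcop, codisjoint_iff.2 ?_⟩
  rw [sup_ker_aeval_eq_ker_aeval_mul_of_coprime f hcop, ← hf, LinearMap.aeval_self_charpoly,
    LinearMap.ker_zero]

theorem ne_smul_id_of_charpoly_eq [Nontrivial R] (hab : IsUnit (a - b))
    (hf : f.charpoly = (X - C a) * (X - C b)) : f ≠ b • LinearMap.id := by
  intro hfb
  have hdet := LinearMap.eval_charpoly f a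
  rw [hf, eval_mul, eval_sub, eval_X, eval_C, sub_self, zero_mul, hfb,
    Algebra.algebraMap_eq_smul_one, Module.End.one_eq_id, ← sub_smul, LinearMap.det_smul,
    LinearMap.det_id, mul_one] at hdet
  exact (hab.pow _).ne_zero hdet.symm

theorem ker_sub_smul_id_ne_bot_of_charpoly_eq [Nontrivial R] (hab : IsUnit (a - b))
    (hf : f.charpoly = (X - C a) * (X - C b)) : LinearMap.ker (f - a • LinearMap.id) ≠ ⊥ := by
  intro hbot
  have htop := isCompl_ker_sub_smul_id_of_charpoly_eq hab hf
  refine ne_smul_id_of_charpoly_eq hab hf (sub_eq_zero.1 (LinearMap.ker_eq_top.1 ?_))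
  exact eq_top_of_isCompl_bot (hbot ▸ htop).symm

end Eigenspaces

theorem Cardinal.eq_one_of_add_eq_two {x y : Cardinal} (h : x + y = 2) (hx : x ≠ 0) (hy : y ≠ 0) :
    x = 1 := by
  obtain ⟨m, -, rfl⟩ := Cardinal.exists_nat_eq_of_le_nat (n := 2) (h ▸ le_self_add)
  obtain ⟨n, -, rfl⟩ := Cardinal.exists_nat_eq_of_le_nat (n := 2) (h ▸ le_add_self)
  norm_cast at h hx hy ⊢
  omega

universe u in
theorem IsCompl.rank_eq_one_of_rank_eq_two {R : Type*} {M : Type u} [Ring R] [IsDomain R]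
    [HasRankNullity.{u} R] [AddCommGroup M] [Module R M] [Module.IsTorsionFree R M]
    {N₁ N₂ : Submodule R M}
    (h : IsCompl N₁ N₂) (h₁ : N₁ ≠ ⊥) (h₂ : N₂ ≠ ⊥) (hM : Module.rank R M = 2) :
    Module.rank R N₁ = 1 := by
  refine Cardinal.eq_one_of_add_eq_two ?_ (mt Submodule.rank_eq_zero.1 h₁)
    (mt Submodule.rank_eq_zero.1 h₂)
  rw [← (Submodule.quotientEquivOfIsCompl N₂ N₁ h.symm).rank_eq, Submodule.rank_quotient_add_rank,
    hM]

/-- Example 5.1.11, Case (a): let `νm ≠ νp` (`ν₋ ≠ ν₊` in the paper) and let `B`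
be a `2×2` matrix over `ℂ[z]` with characteristic polynomial `(X − ν₋)(X − ν₊)`.
Then the eigenspaces `N₋ = Ker(B − ν₋)` and `N₊ = Ker(B − ν₊)` are complementary
`ℂ[z]`-submodules of `ℂ[z]²` and each is a free `ℂ[z]`-module of rank `1`. -/
theorem stmt_10 (νm νp : ℂ) (hne : νm ≠ νp) (B : Matrix (Fin 2) (Fin 2) (Polynomial ℂ))
    (hchar : Matrix.charpoly B =
      (Polynomial.X - Polynomial.C (C νm)) * (Polynomial.X - Polynomial.C (C νp)))
    (Nm Np : Submodule (Polynomial ℂ) (Fin 2 → Polynomial ℂ))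
    (hNm : Nm = LinearMap.ker (Matrix.toLin' B -
      C νm • (LinearMap.id : (Fin 2 → Polynomial ℂ) →ₗ[Polynomial ℂ] Fin 2 → Polynomial ℂ)))
    (hNp : Np = LinearMap.ker (Matrix.toLin' B -
      C νp • (LinearMap.id : (Fin 2 → Polynomial ℂ) →ₗ[Polynomial ℂ] Fin 2 → Polynomial ℂ))) :
    IsCompl Nm Np ∧
    (Module.Free (Polynomial ℂ) Nm ∧ Module.rank (Polynomial ℂ) Nm = 1) ∧
    (Module.Free (Polynomial ℂ) Np ∧ Module.rank (Polynomial ℂ) Np = 1) := by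
  subst hNm hNp
  have hf : (Matrix.toLin' B).charpoly = (X - C (C νm)) * (X - C (C νp)) := by
    rw [Matrix.charpoly_toLin', hchar]
  have hf' : (Matrix.toLin' B).charpoly = (X - C (C νp)) * (X - C (C νm)) := by
    rw [hf, mul_comm]
  have hunit : IsUnit (C νm - C νp) := by
    rw [← C_sub]
    exact isUnit_C.2 (sub_ne_zero.2 hne).isUnit
  have hunit' : IsUnit (C νp - C νm) := by
    rw [← neg_sub]
    exact hunit.neg
  have hcompl := isCompl_ker_sub_smul_id_of_charpoly_eq hunit hf
  have hm := ker_sub_smul_id_ne_bot_of_charpoly_eq hunit hf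
  have hp := ker_sub_smul_id_ne_bot_of_charpoly_eq hunit' hf'
  have hrank : Module.rank ℂ[X] (Fin 2 → ℂ[X]) = 2 := by simp
  exact ⟨hcompl, ⟨inferInstance, hcompl.rank_eq_one_of_rank_eq_two hm hp hrank⟩,
    ⟨inferInstance, hcompl.symm.rank_eq_one_of_rank_eq_two hp hm hrank⟩⟩
end

section
/- There is a ℂ-algebra homomorphism π : H →ₐ[ℂ] MvPolynomial (Fin n ⊕ Fin n) ℂ with π (x i) = X (Sum.inl i), π (p i) = X (Sum.inr i) and π ƛ = 0; moreover π is surjective and its kernel is exactly the two-sided ideal of H generated by ƛ, i.e. for all h ∈ H, π h = 0 ↔ h ∈ TwoSidedIdeal.span {ƛ}. (Property (2) of the canonical family in Section 5.2: the fiber of Q_{𝔸¹}Ω_{𝔸ⁿ} over λ = 0 is the commutative scheme Ω_{𝔸ⁿ}, i.e. H/(ƛ) is the polynomial ring in 2n variables.) -/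
/-!
Sending `Xᵢ, Pᵢ` to the variables and `Λ` to `0` kills every defining relation, so it
induces `π`. Modulo `ƛ` all generators of `H` commute, the only nontrivial commutator
`[pᵢ, xᵢ]` being `ƛ` itself; hence `H/(ƛ)` is commutative, the universal property of
the polynomial ring gives `ψ : ℂ[x, p] → H/(ƛ)` with `ψ ∘ π` the quotient map, and so
`ker π ⊆ (ƛ)`.
-/

/-- The generator `Xᵢ` of the free algebra `F = FreeAlgebra ℂ ((Fin n ⊕ Fin n) ⊕ Unit)`. -/
noncomputable def fwX (n : ℕ) (i : Fin n) : FreeAlgebra ℂ ((Fin n ⊕ Fin n) ⊕ Unit) :=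
  FreeAlgebra.ι ℂ (Sum.inl (Sum.inl i))

/-- The generator `Pᵢ` of the free algebra `F`. -/
noncomputable def fwP (n : ℕ) (i : Fin n) : FreeAlgebra ℂ ((Fin n ⊕ Fin n) ⊕ Unit) :=
  FreeAlgebra.ι ℂ (Sum.inl (Sum.inr i))

/-- The generator `Λ` of the free algebra `F`. -/
noncomputable def fwL (n : ℕ) : FreeAlgebra ℂ ((Fin n ⊕ Fin n) ⊕ Unit) :=
  FreeAlgebra.ι ℂ (Sum.inr Unit.unit)

/-- The defining relations of the homogenized Weyl algebra (the coordinate ring of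
the canonical family `Q_{𝔸¹}Ω_{𝔸ⁿ}` of deformation quantizations of the cotangent
bundle of `𝔸ⁿ`, Section 5.2):
`[xᵢ,xⱼ] = 0`, `[pᵢ,pⱼ] = 0`, `[ƛ,xᵢ] = 0`, `[ƛ,pᵢ] = 0`,
`[pᵢ,xⱼ] = δᵢⱼ ƛ`. -/
inductive WeylRel (n : ℕ) :
    FreeAlgebra ℂ ((Fin n ⊕ Fin n) ⊕ Unit) →
    FreeAlgebra ℂ ((Fin n ⊕ Fin n) ⊕ Unit) → Prop
  | xx (i j : Fin n) : WeylRel n (fwX n i * fwX n j) (fwX n j * fwX n i)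
  | pp (i j : Fin n) : WeylRel n (fwP n i * fwP n j) (fwP n j * fwP n i)
  | lx (i : Fin n) : WeylRel n (fwL n * fwX n i) (fwX n i * fwL n)
  | lp (i : Fin n) : WeylRel n (fwL n * fwP n i) (fwP n i * fwL n)
  | px_same (i : Fin n) : WeylRel n (fwP n i * fwX n i) (fwX n i * fwP n i + fwL n)
  | px_ne (i j : Fin n) : i ≠ j → WeylRel n (fwP n i * fwX n j) (fwX n j * fwP n i)

/-- The homogenized Weyl algebra `H`. -/
noncomputable abbrev HWeyl (n : ℕ) := RingQuot (WeylRel n)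

/-- The element `x i` of `H`. -/
noncomputable def hx (n : ℕ) (i : Fin n) : HWeyl n :=
  RingQuot.mkAlgHom ℂ (WeylRel n) (fwX n i)

/-- The element `p i` of `H`. -/
noncomputable def hp (n : ℕ) (i : Fin n) : HWeyl n :=
  RingQuot.mkAlgHom ℂ (WeylRel n) (fwP n i)

/-- The central element `ƛ` of `H`. -/
noncomputable def hl (n : ℕ) : HWeyl n :=
  RingQuot.mkAlgHom ℂ (WeylRel n) (fwL n)

theorem FreeAlgebra.isMulCommutative_of_surjective {R X A : Type*} [CommRing R] [Ring A]
    [Algebra R A] (f : FreeAlgebra R X →ₐ[R] A) (hf : Function.Surjective f)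
    (hcomm : ∀ v w, Commute (f (ι R v)) (f (ι R w))) : IsMulCommutative A := by
  have hgen : Algebra.adjoin R (Set.range (f ∘ ι R)) = ⊤ := by
    rw [Set.range_comp, ← AlgHom.map_adjoin, FreeAlgebra.adjoin_range_ι, Algebra.map_top,
      (AlgHom.range_eq_top f).mpr hf]
  have commute_of_commute_gen (a : A) (ha : ∀ v, Commute a (f (ι R v))) (b : A) : Commute a b :=
    Algebra.commute_of_mem_adjoin_of_forall_mem_commute (hgen ▸ Algebra.mem_top)
      (by rintro _ ⟨v, rfl⟩; exact ha v)
  exact isMulCommutative_iff.mpr fun a b =>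
    commute_of_commute_gen a (fun v => (commute_of_commute_gen _ (fun w => (hcomm w v).symm) a).symm) b

section HWeyl

variable {n : ℕ}

theorem commute_hx_hx (i j : Fin n) : Commute (hx n i) (hx n j) := by
  simpa only [Commute, SemiconjBy, hx, map_mul] using RingQuot.mkAlgHom_rel ℂ (WeylRel.xx i j)

theorem commute_hp_hp (i j : Fin n) : Commute (hp n i) (hp n j) := by
  simpa only [Commute, SemiconjBy, hp, map_mul] using RingQuot.mkAlgHom_rel ℂ (WeylRel.pp i j)

theorem hp_mul_hx_self (i : Fin n) : hp n i * hx n i = hx n i * hp n i + hl n := by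
  simpa only [hp, hx, hl, map_mul, map_add] using RingQuot.mkAlgHom_rel ℂ (WeylRel.px_same i)

theorem hp_mul_hx_of_ne {i j : Fin n} (hij : i ≠ j) : hp n i * hx n j = hx n j * hp n i := by
  simpa only [hp, hx, map_mul] using RingQuot.mkAlgHom_rel ℂ (WeylRel.px_ne i j hij)

variable (n) in
noncomputable def weylToPoly : HWeyl n →ₐ[ℂ] MvPolynomial (Fin n ⊕ Fin n) ℂ :=
  RingQuot.liftAlgHom ℂ ⟨FreeAlgebra.lift ℂ (Sum.elim MvPolynomial.X 0), by
    intro a b h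
    induction h <;>
      simp [fwX, fwP, fwL, mul_comm]⟩

@[simp]
theorem weylToPoly_hx (i : Fin n) : weylToPoly n (hx n i) = MvPolynomial.X (Sum.inl i) := by
  simp [weylToPoly, hx, fwX]

@[simp]
theorem weylToPoly_hp (i : Fin n) : weylToPoly n (hp n i) = MvPolynomial.X (Sum.inr i) := by
  simp [weylToPoly, hp, fwP]

@[simp]
theorem weylToPoly_hl : weylToPoly n (hl n) = 0 := by
  simp [weylToPoly, hl, fwL]

theorem weylToPoly_surjective : Function.Surjective (weylToPoly n) := by
  rw [← AlgHom.range_eq_top, eq_top_iff, ← MvPolynomial.adjoin_range_X, Algebra.adjoin_le_iff]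
  rintro _ ⟨i | i, rfl⟩
  · exact ⟨hx n i, weylToPoly_hx i⟩
  · exact ⟨hp n i, weylToPoly_hp i⟩

variable (n) in
abbrev HWeylZero := (TwoSidedIdeal.span {hl n}).ringCon.Quotient

variable (n) in
noncomputable def HWeylZero.mk : HWeyl n →ₐ[ℂ] HWeylZero n := RingCon.mkₐ ℂ _

theorem HWeylZero.mk_eq_zero_iff (h : HWeyl n) :
    HWeylZero.mk n h = 0 ↔ h ∈ TwoSidedIdeal.span {hl n} := by
  conv_rhs => rw [← TwoSidedIdeal.ker_ringCon_mk' (TwoSidedIdeal.span {hl n})]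
  exact (TwoSidedIdeal.mem_ker _).symm

@[simp]
theorem HWeylZero.mk_hl : HWeylZero.mk n (hl n) = 0 :=
  (mk_eq_zero_iff _).mpr (TwoSidedIdeal.subset_span rfl)

theorem HWeylZero.commute_mk_hp_mk_hx (i j : Fin n) :
    Commute (mk n (hp n i)) (mk n (hx n j)) := by
  obtain rfl | hij := eq_or_ne i j
  · simp [Commute, SemiconjBy, ← map_mul, hp_mul_hx_self]
  · simp [Commute, SemiconjBy, ← map_mul, hp_mul_hx_of_ne hij]

instance : IsMulCommutative (HWeylZero n) := by
  refine FreeAlgebra.isMulCommutative_of_surjective ((HWeylZero.mk n).comp (RingQuot.mkAlgHom ℂ _))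
    ((RingCon.mkₐ_surjective (α := ℂ) _).comp (RingQuot.mkAlgHom_surjective ℂ _)) ?_
  have hgen : ∀ v, (HWeylZero.mk n).comp (RingQuot.mkAlgHom ℂ _) (FreeAlgebra.ι ℂ v) =
      HWeylZero.mk n (Sum.elim (Sum.elim (hx n) (hp n)) (fun _ => hl n) v) := by
    rintro ((i | i) | ⟨⟩) <;> rfl
  simp only [hgen]
  rintro ((i | i) | ⟨⟩) ((j | j) | ⟨⟩) <;>
    simp only [Sum.elim_inl, Sum.elim_inr, HWeylZero.mk_hl, Commute.zero_left, Commute.zero_right]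
  · exact (commute_hx_hx i j).map _
  · exact (HWeylZero.commute_mk_hp_mk_hx j i).symm
  · exact HWeylZero.commute_mk_hp_mk_hx i j
  · exact (commute_hp_hp i j).map _

-- `aeval` needs a commutative target: the scoped instance turns `IsMulCommutative` into `CommRing`.
open scoped IsMulCommutative in
noncomputable def HWeylZero.ofPoly : MvPolynomial (Fin n ⊕ Fin n) ℂ →ₐ[ℂ] HWeylZero n :=
  MvPolynomial.aeval (Sum.elim (mk n ∘ hx n) (mk n ∘ hp n))

theorem HWeylZero.ofPoly_comp_weylToPoly : ofPoly.comp (weylToPoly n) = mk n := by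
  ext ((i | i) | ⟨⟩)
  · change ofPoly (weylToPoly n (hx n i)) = mk n (hx n i)
    simp [ofPoly]
  · change ofPoly (weylToPoly n (hp n i)) = mk n (hp n i)
    simp [ofPoly]
  · change ofPoly (weylToPoly n (hl n)) = mk n (hl n)
    simp

theorem weylToPoly_eq_zero_iff (h : HWeyl n) :
    weylToPoly n h = 0 ↔ h ∈ TwoSidedIdeal.span {hl n} := by
  refine ⟨fun hh => ?_, fun hh => ?_⟩
  · rw [← HWeylZero.mk_eq_zero_iff, ← HWeylZero.ofPoly_comp_weylToPoly, AlgHom.comp_apply, hh,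
      map_zero]
  · have hle : TwoSidedIdeal.span {hl n} ≤ TwoSidedIdeal.ker (weylToPoly n) :=
      TwoSidedIdeal.span_le.mpr (by simp [TwoSidedIdeal.mem_ker])
    exact (TwoSidedIdeal.mem_ker _).mp (hle hh)

end HWeyl

theorem stmt_12_general (n : ℕ) :
    ∃ π : HWeyl n →ₐ[ℂ] MvPolynomial (Fin n ⊕ Fin n) ℂ,
      (∀ i : Fin n, π (hx n i) = MvPolynomial.X (Sum.inl i)) ∧
      (∀ i : Fin n, π (hp n i) = MvPolynomial.X (Sum.inr i)) ∧
      π (hl n) = 0 ∧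
      Function.Surjective π ∧
      ∀ h : HWeyl n, π h = 0 ↔ h ∈ TwoSidedIdeal.span {hl n} :=
  ⟨weylToPoly n, weylToPoly_hx, weylToPoly_hp, weylToPoly_hl, weylToPoly_surjective,
    weylToPoly_eq_zero_iff⟩

/-- Property (2) of the canonical family `Q_{𝔸¹}Ω_{𝔸ⁿ}` (Section 5.2): there is a
`ℂ`-algebra homomorphism `π : H → ℂ[x₁,…,xₙ,p₁,…,pₙ]` with `π(x i) = X (inl i)`,
`π(p i) = X (inr i)` and `π(ƛ) = 0`; it is surjective with kernel exactly the
two-sided ideal generated by `ƛ`.  In other words, the fiber of the family over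
`λ = 0` is the commutative scheme `Ω_{𝔸ⁿ}`. -/
theorem stmt_12 (n : ℕ) (hn : 0 < n) :
    ∃ π : HWeyl n →ₐ[ℂ] MvPolynomial (Fin n ⊕ Fin n) ℂ,
      (∀ i : Fin n, π (hx n i) = MvPolynomial.X (Sum.inl i)) ∧
      (∀ i : Fin n, π (hp n i) = MvPolynomial.X (Sum.inr i)) ∧
      π (hl n) = 0 ∧
      Function.Surjective π ∧
      ∀ h : HWeyl n, π h = 0 ↔ h ∈ TwoSidedIdeal.span {hl n} :=
  stmt_12_general n
end
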